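/- arXiv:2601.02059 — 2 statements merged into one kernel-verified Lean document; each statement's English description precedes it below -/
import Mathlib

section
/- Let X be a set with an asymmetric metric d (satisfying d(x,y) ≥ 0, d(x,y) = 0 iff x = y, and the triangle inequality, but not necessarily symmetry), and define d_sym(x,y) := d(x,y) + d(y,x). If γ : [0,1] → X satisfies the additivity condition for d_sym, i.e. d_sym(γ(s),γ(u)) = d_sym(γ(s),γ(t)) + d_sym(γ(t),γ(u)) for all 0 ≤ s < t < u ≤ 1, then γ satisfies the same additivity condition for d: d(γ(s),γ(u)) = d(γ(s),γ(t)) + d(γ(t),γ(u)) for all 0 ≤ s < t < u ≤ 1, and likewise in the reverse order d(γ(u),γ(s)) = d(γ(u),γ(t)) + d(γ(t),γ(s)). -/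
/-- If γ is an (unparametrized) geodesic for the symmetrized metric d_sym of an
asymmetric metric d, then it is a geodesic for d in both orders. -/
theorem stmt0 {X : Type*} (d : X → X → ℝ)
    (hnonneg : ∀ x y, 0 ≤ d x y)
    (hid : ∀ x y, d x y = 0 ↔ x = y)
    (htri : ∀ x y z, d x z ≤ d x y + d y z)
    (γ : ℝ → X)
    (hsym : ∀ s t u : ℝ, 0 ≤ s → s < t → t < u → u ≤ 1 →
      d (γ s) (γ u) + d (γ u) (γ s) =
        (d (γ s) (γ t) + d (γ t) (γ s)) + (d (γ t) (γ u) + d (γ u) (γ t))) :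
    ∀ s t u : ℝ, 0 ≤ s → s < t → t < u → u ≤ 1 →
      d (γ s) (γ u) = d (γ s) (γ t) + d (γ t) (γ u) ∧
      d (γ u) (γ s) = d (γ u) (γ t) + d (γ t) (γ s) := by
  intro s t u hs hst htu hu
  have h := hsym s t u hs hst htu hu
  have h1 := htri (γ s) (γ t) (γ u)
  have h2 := htri (γ u) (γ t) (γ s)
  constructor <;> linarith
end

section
/- Let I be a nonempty index set, i(b,·) : I → ℝ_{>0} and i(z,·) : I → ℝ_{≥0} with D := sup_{c∈I} i(z,c)/i(b,c) finite. For t ≥ 0 set g_t(c) := i(b,c) + t·i(z,c). Then for all 0 ≤ s ≤ t: (sup_c g_s(c)/i(b,c)) · (sup_c g_t(c)/g_s(c)) = sup_c g_t(c)/i(b,c). Equivalently, (1 + sD)·sup_c (1 + t·f(c))/(1 + s·f(c)) = 1 + tD, where f(c) := i(z,c)/i(b,c). -/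
open Set

/-! Put `f c = iz c / ib c` and `D = sup f`. Each quotient in the identity is
`(1 + t f c) / (1 + s f c)` (with `s = 0` for the first and last), and `x ↦ (1 + t x) / (1 + s x)` is
monotone and continuous on `[0, ∞)` when `0 ≤ s ≤ t`, so it commutes with the supremum. The three
suprema are thus `1 + s D`, `(1 + t D) / (1 + s D)` and `1 + t D`. -/

theorem MonotoneOn.map_ciSup_of_continuousAt {α β : Type*} [ConditionallyCompleteLinearOrder α]
    [TopologicalSpace α] [OrderTopology α] [ConditionallyCompleteLinearOrder β]
    [TopologicalSpace β] [OrderClosedTopology β] {ι : Sort*} [Nonempty ι] {f : α → β} {g : ι → α}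
    (Cf : ContinuousAt f (iSup g)) (Mf : MonotoneOn f (range g)) (bdd : BddAbove (range g)) :
    f (⨆ i, g i) = ⨆ i, f (g i) := by
  rw [iSup, Mf.map_csSup_of_continuousWithinAt Cf.continuousWithinAt (range_nonempty g) bdd,
    ← range_comp, iSup, Function.comp_def]

theorem monotoneOn_one_add_mul_div_one_add_mul {s t : ℝ} (hs : 0 ≤ s) (hst : s ≤ t) :
    MonotoneOn (fun x => (1 + t * x) / (1 + s * x)) (Ici 0) := by
  intro x hx y hy hxy
  simp only [mem_Ici] at hx hy
  rw [div_le_div_iff₀ (by positivity) (by positivity)]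
  nlinarith [mul_le_mul_of_nonneg_left hxy (sub_nonneg.2 hst)]

theorem ciSup_add_mul_div_add_mul {I : Type*} [Nonempty I] {ib iz : I → ℝ}
    (hb : ∀ c, 0 < ib c) (hz : ∀ c, 0 ≤ iz c) (hbdd : BddAbove (range fun c => iz c / ib c))
    {s t : ℝ} (hs : 0 ≤ s) (hst : s ≤ t) :
    ⨆ c, (ib c + t * iz c) / (ib c + s * iz c) =
      (1 + t * ⨆ c, iz c / ib c) / (1 + s * ⨆ c, iz c / ib c) := by
  have hf : ∀ c, 0 ≤ iz c / ib c := fun c => div_nonneg (hz c) (hb c).le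
  have hD : 0 ≤ ⨆ c, iz c / ib c := Real.iSup_nonneg hf
  have hquot : ∀ c, (ib c + t * iz c) / (ib c + s * iz c) =
      (1 + t * (iz c / ib c)) / (1 + s * (iz c / ib c)) := fun c => by
    field_simp [(hb c).ne']
  simp only [hquot]
  refine (MonotoneOn.map_ciSup_of_continuousAt ?_
    ((monotoneOn_one_add_mul_div_one_add_mul hs hst).mono ?_) hbdd).symm
  · exact (by fun_prop : Continuous fun x : ℝ => 1 + t * x).continuousAt.div (by fun_prop)
      (by positivity)
  · rintro _ ⟨c, rfl⟩
    exact hf c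

/-- The key multiplicative dilation identity along the path t ↦ b + t·z:
`Dil(b, γ(s)) · Dil(γ(s), γ(t)) = Dil(b, γ(t))` for `0 ≤ s ≤ t`. -/
theorem stmt3 {I : Type*} [Nonempty I]
    (ib iz : I → ℝ)
    (hb : ∀ c, 0 < ib c) (hz : ∀ c, 0 ≤ iz c)
    (hbdd : BddAbove (Set.range fun c => iz c / ib c)) :
    ∀ s t : ℝ, 0 ≤ s → s ≤ t →
      (⨆ c, (ib c + s * iz c) / ib c) *
        (⨆ c, (ib c + t * iz c) / (ib c + s * iz c)) =
      ⨆ c, (ib c + t * iz c) / ib c := by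
  intro s t hs hst
  have hD : 0 ≤ ⨆ c, iz c / ib c := Real.iSup_nonneg fun c => div_nonneg (hz c) (hb c).le
  have h0s := ciSup_add_mul_div_add_mul hb hz hbdd le_rfl hs
  have h0t := ciSup_add_mul_div_add_mul hb hz hbdd le_rfl (hs.trans hst)
  simp only [zero_mul, add_zero, div_one] at h0s h0t
  rw [h0s, h0t, ciSup_add_mul_div_add_mul hb hz hbdd hs hst, mul_div_cancel₀ _ (by positivity)]
end
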